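/- arXiv:2106.07153 — 3 statements merged into one kernel-verified Lean document; each statement's English description precedes it below -/
import Mathlib

section
/- Let X be a finite nonempty set, U a distribution on X with U(x) > 0 for all x, q_1, …, q_t : X → [0,1] statistical queries, a_1, …, a_t ∈ ℝ, and λ = (λ_1, …, λ_t) ∈ ℝ^t. Then the minimum over all distributions D on X of the partial Lagrangian KL(D‖U) + Σ_{i=1}^t λ_i (q_i(D) − a_i) equals −log( Σ_{x∈X} U(x) exp(−Σ_{i=1}^t λ_i (q_i(x) − a_i)) ), and it is attained at the unique distribution D_λ(x) = U(x) exp(−Σ_{i=1}^t λ_i q_i(x)) / Z_λ, where Z_λ = Σ_{x'∈X} U(x') exp(−Σ_{i=1}^t λ_i q_i(x')). -/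
/-!
With `f = ∑ i, λ i • q i`, the partial Lagrangian is `KL(D‖U) + ⟨f, D⟩ - ∑ i, λ i * a i`.
For a distribution `D` and the Gibbs distribution `D_λ = U e^{-f} / Z_λ` one has
`KL(D‖U) + ⟨f, D⟩ = KL(D‖D_λ) - log Z_λ`, so by Gibbs' inequality (`KL(D‖D_λ) ≥ 0`, with
equality only at `D = D_λ`) the Lagrangian is minimized exactly at `D_λ`, with value
`-log Z_λ - ∑ i, λ i * a i = -log (∑ x, U x * exp (-∑ i, λ i * (q i x - a i)))`.
-/

open Real Finset InformationTheory

lemma mul_klFun_div_eq {d p : ℝ} (hp : 0 < p) :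
    p * klFun (d / p) = d * log (d / p) + p - d := by
  rw [klFun_apply]; field_simp

section Gibbs

variable {X : Type*} [Fintype X] {D P : X → ℝ}

/-- Each summand `p * klFun (d / p) = d log (d / p) + p - d` is nonnegative and vanishes only at
`d = p`; the extra terms `p - d` cancel when `D` and `P` have the same mass. -/
lemma sum_mul_log_div_eq_sum_mul_klFun (hP : ∀ x, 0 < P x) (hD1 : ∑ x, D x = 1)
    (hP1 : ∑ x, P x = 1) :
    ∑ x, D x * log (D x / P x) = ∑ x, P x * klFun (D x / P x) := by
  simp only [mul_klFun_div_eq (hP _), sum_sub_distrib, sum_add_distrib, hD1, hP1]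
  ring

theorem sum_mul_log_div_nonneg (hD : ∀ x, 0 ≤ D x) (hP : ∀ x, 0 < P x)
    (hD1 : ∑ x, D x = 1) (hP1 : ∑ x, P x = 1) :
    0 ≤ ∑ x, D x * log (D x / P x) := by
  rw [sum_mul_log_div_eq_sum_mul_klFun hP hD1 hP1]
  exact sum_nonneg fun x _ => mul_nonneg (hP x).le (klFun_nonneg (div_nonneg (hD x) (hP x).le))

theorem eq_of_sum_mul_log_div_eq_zero (hD : ∀ x, 0 ≤ D x) (hP : ∀ x, 0 < P x)
    (hD1 : ∑ x, D x = 1) (hP1 : ∑ x, P x = 1) (h : ∑ x, D x * log (D x / P x) = 0) :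
    D = P := by
  rw [sum_mul_log_div_eq_sum_mul_klFun hP hD1 hP1, sum_eq_zero_iff_of_nonneg fun x _ =>
    mul_nonneg (hP x).le (klFun_nonneg (div_nonneg (hD x) (hP x).le))] at h
  funext x
  have hx := (mul_eq_zero.mp (h x (mem_univ x))).resolve_left (hP x).ne'
  rwa [klFun_eq_zero_iff (div_nonneg (hD x) (hP x).le), div_eq_one_iff_eq (hP x).ne'] at hx

end Gibbs

section GibbsDistribution

variable {X : Type*} [Fintype X] (U f : X → ℝ)

noncomputable def gibbsPartition : ℝ := ∑ x, U x * exp (-f x)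

noncomputable def gibbsDist (x : X) : ℝ := U x * exp (-f x) / gibbsPartition U f

noncomputable def freeEnergy (D : X → ℝ) : ℝ :=
  ∑ x, D x * log (D x / U x) + ∑ x, f x * D x

variable {U} [Nonempty X]

lemma gibbsPartition_pos (hU : ∀ x, 0 < U x) : 0 < gibbsPartition U f :=
  sum_pos (fun x _ => mul_pos (hU x) (exp_pos _)) univ_nonempty

lemma gibbsDist_pos (hU : ∀ x, 0 < U x) (x : X) : 0 < gibbsDist U f x :=
  div_pos (mul_pos (hU x) (exp_pos _)) (gibbsPartition_pos f hU)

lemma sum_gibbsDist (hU : ∀ x, 0 < U x) : ∑ x, gibbsDist U f x = 1 := by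
  simp only [gibbsDist, ← sum_div]
  exact div_self (gibbsPartition_pos f hU).ne'

lemma mul_log_div_add_mul_eq (hU : ∀ x, 0 < U x) {d : ℝ} (hd : 0 ≤ d) (x : X) :
    d * log (d / U x) + f x * d =
      d * log (d / gibbsDist U f x) - d * log (gibbsPartition U f) := by
  rcases hd.eq_or_lt with rfl | hd
  · simp
  have hZ := gibbsPartition_pos f hU
  have hsplit : d / gibbsDist U f x = d / U x * (exp (f x) * gibbsPartition U f) := by
    rw [gibbsDist, exp_neg]; field_simp
  rw [hsplit, log_mul (div_pos hd (hU x)).ne' (by positivity), log_mul (exp_ne_zero _) hZ.ne',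
    log_exp]
  ring

lemma freeEnergy_eq (hU : ∀ x, 0 < U x) {D : X → ℝ} (hD : ∀ x, 0 ≤ D x)
    (hD1 : ∑ x, D x = 1) :
    freeEnergy U f D = ∑ x, D x * log (D x / gibbsDist U f x) - log (gibbsPartition U f) := by
  rw [freeEnergy, ← sum_add_distrib]
  simp only [mul_log_div_add_mul_eq f hU (hD _), sum_sub_distrib, ← sum_mul, hD1, one_mul]

lemma freeEnergy_gibbsDist (hU : ∀ x, 0 < U x) :
    freeEnergy U f (gibbsDist U f) = -log (gibbsPartition U f) := by
  rw [freeEnergy_eq f hU (fun x => (gibbsDist_pos f hU x).le) (sum_gibbsDist f hU)]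
  simp [div_self (gibbsDist_pos f hU _).ne']

lemma neg_log_gibbsPartition_le_freeEnergy (hU : ∀ x, 0 < U x) {D : X → ℝ}
    (hD : ∀ x, 0 ≤ D x) (hD1 : ∑ x, D x = 1) : -log (gibbsPartition U f) ≤ freeEnergy U f D := by
  rw [freeEnergy_eq f hU hD hD1]
  linarith [sum_mul_log_div_nonneg hD (gibbsDist_pos f hU) hD1 (sum_gibbsDist f hU)]

lemma eq_gibbsDist_of_freeEnergy_eq (hU : ∀ x, 0 < U x) {D : X → ℝ} (hD : ∀ x, 0 ≤ D x)
    (hD1 : ∑ x, D x = 1) (h : freeEnergy U f D = -log (gibbsPartition U f)) :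
    D = gibbsDist U f := by
  rw [freeEnergy_eq f hU hD hD1] at h
  exact eq_of_sum_mul_log_div_eq_zero hD (gibbsDist_pos f hU) hD1 (sum_gibbsDist f hU)
    (by linarith)

end GibbsDistribution

theorem pep_partial_lagrangian_minimizer_general
    {X : Type*} [Fintype X] [Nonempty X]
    (U : X → ℝ) (hU0 : ∀ x, 0 < U x)
    (t : ℕ) (q : Fin t → X → ℝ)
    (a : Fin t → ℝ) (lam : Fin t → ℝ)
    (KL : (X → ℝ) → (X → ℝ) → ℝ)
    (hKL : ∀ D V : X → ℝ, KL D V = ∑ x, D x * Real.log (D x / V x))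
    (L : (X → ℝ) → ℝ)
    (hL : ∀ D : X → ℝ,
      L D = KL D U + ∑ i, lam i * ((∑ x, q i x * D x) - a i))
    (Z : ℝ) (hZ : Z = ∑ x', U x' * Real.exp (-∑ i, lam i * q i x'))
    (Dlam : X → ℝ)
    (hDlam : ∀ x, Dlam x = U x * Real.exp (-∑ i, lam i * q i x) / Z) :
    (∀ x, 0 ≤ Dlam x) ∧ (∑ x, Dlam x = 1) ∧
    (L Dlam = -Real.log (∑ x, U x * Real.exp (-∑ i, lam i * (q i x - a i)))) ∧
    (∀ D : X → ℝ, (∀ x, 0 ≤ D x) → (∑ x, D x = 1) → L Dlam ≤ L D) ∧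
    (∀ D : X → ℝ, (∀ x, 0 ≤ D x) → (∑ x, D x = 1) → L D = L Dlam → D = Dlam) := by
  set f : X → ℝ := fun x => ∑ i, lam i * q i x
  set C := ∑ i, lam i * a i
  have hDlam_eq : Dlam = gibbsDist U f := funext fun x => by rw [hDlam, hZ]; rfl
  subst hDlam_eq
  have hL_eq (D : X → ℝ) : L D = freeEnergy U f D - C := by
    rw [hL, hKL, freeEnergy, add_sub_assoc]
    simp only [f, C, mul_sub, sum_sub_distrib, mul_sum, sum_mul]
    rw [sum_comm]
    simp only [mul_assoc, mul_comm (q _ _)]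
  have hLmin : L (gibbsDist U f) = -log (gibbsPartition U f) - C := by
    rw [hL_eq, freeEnergy_gibbsDist f hU0]
  have hvalue : ∑ x, U x * exp (-∑ i, lam i * (q i x - a i)) = gibbsPartition U f * exp C := by
    rw [gibbsPartition, sum_mul]
    refine sum_congr rfl fun x _ => ?_
    rw [mul_assoc, ← exp_add]
    simp only [f, C, mul_sub, sum_sub_distrib]
    ring_nf
  refine ⟨fun x => (gibbsDist_pos f hU0 x).le, sum_gibbsDist f hU0, ?_, fun D hD hD1 => ?_,
    fun D hD hD1 h => ?_⟩
  · rw [hLmin, hvalue, log_mul (gibbsPartition_pos f hU0).ne' (exp_ne_zero _), log_exp]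
    ring
  · rw [hLmin, hL_eq]
    linarith [neg_log_gibbsPartition_le_freeEnergy f hU0 hD hD1]
  · rw [hLmin, hL_eq] at h
    exact eq_gibbsDist_of_freeEnergy_eq f hU0 hD hD1 (by linarith)

/-- The partial Lagrangian `KL(D‖U) + ∑ i λ i * (q i (D) - a i)` is minimized
over distributions `D` on a finite nonempty set `X` at the unique exponential-family
distribution `D_λ(x) = U x * exp (-∑ i λ i * q i x) / Z_λ`, and the minimum value equals
`-log (∑ x U x * exp (-∑ i λ i * (q i x - a i)))`. -/
theorem pep_partial_lagrangian_minimizer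
    {X : Type*} [Fintype X] [Nonempty X]
    (U : X → ℝ) (hU0 : ∀ x, 0 < U x) (hU1 : ∑ x, U x = 1)
    (t : ℕ) (q : Fin t → X → ℝ) (hq : ∀ i x, q i x ∈ Set.Icc (0 : ℝ) 1)
    (a : Fin t → ℝ) (lam : Fin t → ℝ)
    (KL : (X → ℝ) → (X → ℝ) → ℝ)
    (hKL : ∀ D V : X → ℝ, KL D V = ∑ x, D x * Real.log (D x / V x))
    (L : (X → ℝ) → ℝ)
    (hL : ∀ D : X → ℝ,
      L D = KL D U + ∑ i, lam i * ((∑ x, q i x * D x) - a i))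
    (Z : ℝ) (hZ : Z = ∑ x', U x' * Real.exp (-∑ i, lam i * q i x'))
    (Dlam : X → ℝ)
    (hDlam : ∀ x, Dlam x = U x * Real.exp (-∑ i, lam i * q i x) / Z) :
    (∀ x, 0 ≤ Dlam x) ∧ (∑ x, Dlam x = 1) ∧
    (L Dlam = -Real.log (∑ x, U x * Real.exp (-∑ i, lam i * (q i x - a i)))) ∧
    (∀ D : X → ℝ, (∀ x, 0 ≤ D x) → (∑ x, D x = 1) → L Dlam ≤ L D) ∧
    (∀ D : X → ℝ, (∀ x, 0 ≤ D x) → (∑ x, D x = 1) → L D = L Dlam → D = Dlam) :=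
  pep_partial_lagrangian_minimizer_general U hU0 t q a lam KL hKL L hL Z hZ Dlam hDlam
end

section
/- Let X be a finite nonempty set, U a distribution on X with U(x) > 0 for all x, q_1, …, q_t : X → [0,1] statistical queries, a_1, …, a_t ∈ ℝ, and γ ≥ 0. Then for every λ = (λ_1, …, λ_t) ∈ ℝ^t and every distribution D on X satisfying the accuracy constraints |q_i(D) − a_i| ≤ γ for all i ∈ [t], the following weak-duality lower bound holds: KL(D‖U) ≥ −log( Σ_{x∈X} U(x) exp(−Σ_{i=1}^t λ_i (q_i(x) − a_i)) ) − γ Σ_{i=1}^t |λ_i|. Equivalently, the negated PEP dual loss log(Σ_{x∈X} U(x) exp(−Σ_i λ_i (q_i(x)−a_i))) + γ‖λ‖_1 upper-bounds −KL(D‖U) for every feasible D. -/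
/-- Weak duality for the PEP maximum-entropy projection problem.
For every `λ ∈ ℝ^t` and every distribution `D` satisfying the accuracy constraints
`|q i (D) - a i| ≤ γ` for all `i`, one has
`KL(D‖U) ≥ -log (∑ x U x * exp (-∑ i λ i * (q i x - a i))) - γ * ‖λ‖₁`. -/
theorem pep_weak_duality
    {X : Type*} [Fintype X] [Nonempty X]
    (U : X → ℝ) (hU0 : ∀ x, 0 < U x) (hU1 : ∑ x, U x = 1)
    (t : ℕ) (q : Fin t → X → ℝ) (hq : ∀ i x, q i x ∈ Set.Icc (0 : ℝ) 1)
    (a : Fin t → ℝ) (γ : ℝ) (hγ : 0 ≤ γ)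
    (KL : (X → ℝ) → (X → ℝ) → ℝ)
    (hKL : ∀ D V : X → ℝ, KL D V = ∑ x, D x * Real.log (D x / V x))
    (lam : Fin t → ℝ)
    (D : X → ℝ) (hD0 : ∀ x, 0 ≤ D x) (hD1 : ∑ x, D x = 1)
    (hfeas : ∀ i, |(∑ x, q i x * D x) - a i| ≤ γ) :
    KL D U ≥
      -Real.log (∑ x, U x * Real.exp (-∑ i, lam i * (q i x - a i)))
        - γ * ∑ i, |lam i| := by
  set f : X → ℝ := fun x => -∑ i, lam i * (q i x - a i) with hf
  set Z : ℝ := ∑ x, U x * Real.exp (f x) with hZ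
  have hZpos : 0 < Z :=
    Finset.sum_pos (fun x _ => mul_pos (hU0 x) (Real.exp_pos _)) Finset.univ_nonempty
  -- per-term Gibbs inequality
  have key : ∀ x, D x * f x - D x * Real.log (D x / U x) - D x * Real.log Z
      ≤ U x * Real.exp (f x) / Z - D x := by
    intro x
    rcases eq_or_lt_of_le (hD0 x) with h | h
    · rw [← h]
      simp only [zero_mul, sub_zero, zero_sub, neg_zero, sub_zero]
      exact div_nonneg (mul_nonneg (hU0 x).le (Real.exp_pos _).le) hZpos.le
    · have hy : 0 < U x * Real.exp (f x) / (D x * Z) :=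
        div_pos (mul_pos (hU0 x) (Real.exp_pos _)) (mul_pos h hZpos)
      have hlog := Real.log_le_sub_one_of_pos hy
      have hexp : Real.log (U x * Real.exp (f x) / (D x * Z))
          = Real.log (U x) + f x - Real.log (D x) - Real.log Z := by
        rw [Real.log_div (ne_of_gt (mul_pos (hU0 x) (Real.exp_pos _))) (ne_of_gt (mul_pos h hZpos)),
          Real.log_mul (ne_of_gt (hU0 x)) (Real.exp_ne_zero _), Real.log_exp,
          Real.log_mul (ne_of_gt h) (ne_of_gt hZpos)]
        ring
      have hdiv : Real.log (D x / U x) = Real.log (D x) - Real.log (U x) :=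
        Real.log_div (ne_of_gt h) (ne_of_gt (hU0 x))
      have h2 : D x * Real.log (U x * Real.exp (f x) / (D x * Z))
          ≤ D x * (U x * Real.exp (f x) / (D x * Z) - 1) :=
        mul_le_mul_of_nonneg_left hlog (le_of_lt h)
      rw [hexp] at h2
      have h3 : D x * (U x * Real.exp (f x) / (D x * Z) - 1)
          = U x * Real.exp (f x) / Z - D x := by
        field_simp
      have h4 : D x * (Real.log (U x) + f x - Real.log (D x) - Real.log Z)
          = D x * f x - D x * (Real.log (D x) - Real.log (U x)) - D x * Real.log Z := by
        ring
      rw [h3, h4] at h2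
      rw [hdiv]
      linarith
  have hsum := Finset.sum_le_sum (fun x (_ : x ∈ Finset.univ) => key x)
  have hL : ∑ x, (D x * f x - D x * Real.log (D x / U x) - D x * Real.log Z)
      = (∑ x, D x * f x) - (∑ x, D x * Real.log (D x / U x)) - Real.log Z := by
    rw [Finset.sum_sub_distrib, Finset.sum_sub_distrib, ← Finset.sum_mul, hD1, one_mul]
  have hR : ∑ x, (U x * Real.exp (f x) / Z - D x) = 0 := by
    rw [Finset.sum_sub_distrib, ← Finset.sum_div, ← hZ, hD1, div_self (ne_of_gt hZpos)]
    ring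
  rw [hL, hR] at hsum
  -- step 2: lower bound the linear term
  have hswap : ∑ x, D x * f x = ∑ i, -(lam i * ((∑ x, q i x * D x) - a i)) := by
    have h1 : ∀ i, lam i * ((∑ x, q i x * D x) - a i)
        = ∑ x, lam i * (q i x - a i) * D x := by
      intro i
      have hx : (∑ x, (q i x - a i) * D x) = (∑ x, q i x * D x) - a i := by
        simp only [sub_mul, Finset.sum_sub_distrib, ← Finset.mul_sum, hD1, mul_one]
      rw [← hx, Finset.mul_sum]
      exact Finset.sum_congr rfl fun x _ => by ring
    simp only [h1, ← Finset.sum_neg_distrib]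
    rw [Finset.sum_comm]
    exact Finset.sum_congr rfl fun x _ => by
      simp only [hf, Finset.mul_sum, mul_neg, ← Finset.sum_neg_distrib]
      exact Finset.sum_congr rfl fun i _ => by ring
  have step2 : -(γ * ∑ i, |lam i|) ≤ ∑ x, D x * f x := by
    rw [hswap, Finset.mul_sum, ← Finset.sum_neg_distrib]
    refine Finset.sum_le_sum fun i _ => ?_
    have h5 : |lam i * ((∑ x, q i x * D x) - a i)| ≤ |lam i| * γ := by
      rw [abs_mul]
      exact mul_le_mul_of_nonneg_left (hfeas i) (abs_nonneg _)
    have h6 := le_abs_self (lam i * ((∑ x, q i x * D x) - a i))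
    linarith
  rw [hKL]
  linarith
end

section
/- Let X be a finite nonempty set, U a distribution on X with U(x) > 0 for all x, q_1, …, q_t : X → [0,1] statistical queries, and a_1, …, a_t ∈ ℝ. Suppose λ = (λ_1, …, λ_t) ∈ ℝ^t is such that the exponential-family distribution D_λ(x) = U(x) exp(−Σ_{i=1}^t λ_i q_i(x)) / Z_λ, with Z_λ = Σ_{x'∈X} U(x') exp(−Σ_{i=1}^t λ_i q_i(x')), satisfies the constraints q_i(D_λ) = a_i for all i ∈ [t]. Then for every distribution D on X with q_i(D) = a_i for all i ∈ [t], the Pythagorean identity KL(D‖U) = KL(D‖D_λ) + KL(D_λ‖U) holds; in particular, D_λ is the unique minimizer of KL(D‖U) over all distributions D satisfying q_i(D) = a_i for all i ∈ [t]. Thus the maximum-entropy projection subject to exact query constraints is an exponentially weighted distribution parameterized by the dual variables λ_1, …, λ_t. -/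
lemma gibbs_aux {X : Type*} [Fintype X] (D V : X → ℝ)
    (hD0 : ∀ x, 0 ≤ D x) (hV0 : ∀ x, 0 < V x)
    (hD1 : ∑ x, D x = 1) (hV1 : ∑ x, V x = 1) :
    (0 ≤ ∑ x, D x * Real.log (D x / V x)) ∧
    ((∑ x, D x * Real.log (D x / V x)) = 0 → D = V) := by
  have key : ∀ x, D x - V x ≤ D x * Real.log (D x / V x) := by
    intro x
    rcases eq_or_lt_of_le (hD0 x) with h | h
    · rw [← h]; simp; linarith [(hV0 x).le]
    · have hpos : 0 < V x / D x := div_pos (hV0 x) h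
      have hle := Real.log_le_sub_one_of_pos hpos
      have hlog : Real.log (V x / D x) = - Real.log (D x / V x) := by
        rw [← Real.log_inv]; congr 1; field_simp
      rw [hlog] at hle
      have h2 : D x * (- Real.log (D x / V x)) ≤ D x * (V x / D x - 1) :=
        mul_le_mul_of_nonneg_left hle h.le
      have h3 : D x * (V x / D x - 1) = V x - D x := by field_simp
      nlinarith
  have hsum : ∑ x, (D x - V x) ≤ ∑ x, D x * Real.log (D x / V x) :=
    Finset.sum_le_sum fun x _ => key x
  rw [Finset.sum_sub_distrib, hD1, hV1] at hsum
  constructor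
  · linarith
  · intro h0
    have heach : ∀ x ∈ Finset.univ, D x * Real.log (D x / V x) - (D x - V x) = 0 := by
      apply (Finset.sum_eq_zero_iff_of_nonneg (fun x _ => by linarith [key x])).mp
      rw [Finset.sum_sub_distrib, Finset.sum_sub_distrib, hD1, hV1, h0]; ring
    funext x
    have hx := heach x (Finset.mem_univ x)
    by_contra hne
    rcases eq_or_lt_of_le (hD0 x) with h | h
    · rw [← h] at hx
      simp at hx
      exact absurd hx.symm (ne_of_lt (hV0 x))
    · have hpos : 0 < V x / D x := div_pos (hV0 x) h
      have hne1 : V x / D x ≠ 1 := by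
        intro h1
        apply hne
        field_simp at h1
        linarith
      have hstrict := Real.log_lt_sub_one_of_pos hpos hne1
      have hlog : Real.log (V x / D x) = - Real.log (D x / V x) := by
        rw [← Real.log_inv]; congr 1; field_simp
      rw [hlog] at hstrict
      have h2 : D x * (- Real.log (D x / V x)) < D x * (V x / D x - 1) :=
        mul_lt_mul_of_pos_left hstrict h
      have h3 : D x * (V x / D x - 1) = V x - D x := by field_simp
      nlinarith

/-- If the exponential-family distribution
`D_λ(x) = U x * exp (-∑ i λ i * q i x) / Z_λ` satisfies the exact constraints
`q i (D_λ) = a i` for all `i`, then for every distribution `D` with `q i (D) = a i`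
for all `i`, the Pythagorean identity `KL(D‖U) = KL(D‖D_λ) + KL(D_λ‖U)` holds;
in particular `D_λ` is the unique minimizer of `KL(·‖U)` over feasible distributions. -/
theorem pep_pythagorean_maxent
    {X : Type*} [Fintype X] [Nonempty X]
    (U : X → ℝ) (hU0 : ∀ x, 0 < U x) (hU1 : ∑ x, U x = 1)
    (t : ℕ) (q : Fin t → X → ℝ) (hq : ∀ i x, q i x ∈ Set.Icc (0 : ℝ) 1)
    (a : Fin t → ℝ) (lam : Fin t → ℝ)
    (KL : (X → ℝ) → (X → ℝ) → ℝ)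
    (hKL : ∀ D V : X → ℝ, KL D V = ∑ x, D x * Real.log (D x / V x))
    (Z : ℝ) (hZ : Z = ∑ x', U x' * Real.exp (-∑ i, lam i * q i x'))
    (Dlam : X → ℝ)
    (hDlam : ∀ x, Dlam x = U x * Real.exp (-∑ i, lam i * q i x) / Z)
    (hconstr : ∀ i, (∑ x, q i x * Dlam x) = a i) :
    (∀ x, 0 ≤ Dlam x) ∧ (∑ x, Dlam x = 1) ∧
    (∀ D : X → ℝ, (∀ x, 0 ≤ D x) → (∑ x, D x = 1) →
      (∀ i, (∑ x, q i x * D x) = a i) →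
      KL D U = KL D Dlam + KL Dlam U) ∧
    (∀ D : X → ℝ, (∀ x, 0 ≤ D x) → (∑ x, D x = 1) →
      (∀ i, (∑ x, q i x * D x) = a i) →
      KL Dlam U ≤ KL D U ∧ (KL D U = KL Dlam U → D = Dlam)) := by
  have hZ0 : 0 < Z := by
    rw [hZ]
    exact Finset.sum_pos (fun x _ => mul_pos (hU0 x) (Real.exp_pos _)) Finset.univ_nonempty
  have hDl0 : ∀ x, 0 < Dlam x := fun x => by
    rw [hDlam x]; exact div_pos (mul_pos (hU0 x) (Real.exp_pos _)) hZ0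
  have hDl1 : ∑ x, Dlam x = 1 := by
    have : ∑ x, Dlam x = (∑ x, U x * Real.exp (-∑ i, lam i * q i x)) / Z := by
      rw [Finset.sum_div]; exact Finset.sum_congr rfl fun x _ => hDlam x
    rw [this, ← hZ, div_self (ne_of_gt hZ0)]
  -- log ratio formula
  have hlogratio : ∀ x, Real.log (Dlam x / U x)
      = (-∑ i, lam i * q i x) - Real.log Z := by
    intro x
    have hrw : Dlam x / U x = Real.exp (-∑ i, lam i * q i x) / Z := by
      rw [hDlam x, div_div, mul_comm Z (U x), mul_div_mul_left _ _ (ne_of_gt (hU0 x))]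
    rw [hrw, Real.log_div (Real.exp_ne_zero _) (ne_of_gt hZ0), Real.log_exp]
  -- common value of cross term
  have hS : ∀ D : X → ℝ, (∑ x, D x = 1) → (∀ i, (∑ x, q i x * D x) = a i) →
      ∑ x, D x * Real.log (Dlam x / U x) = -(∑ i, lam i * a i) - Real.log Z := by
    intro D hD1 hDc
    have swap : ∑ x, D x * (∑ i, lam i * q i x) = ∑ i, lam i * a i := by
      simp_rw [Finset.mul_sum]
      rw [Finset.sum_comm]
      refine Finset.sum_congr rfl fun i _ => ?_
      rw [← hDc i, Finset.mul_sum]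
      exact Finset.sum_congr rfl fun x _ => by ring
    calc ∑ x, D x * Real.log (Dlam x / U x)
        = ∑ x, (-(D x * (∑ i, lam i * q i x)) - D x * Real.log Z) := by
          refine Finset.sum_congr rfl fun x _ => ?_
          rw [hlogratio x]; ring
      _ = -(∑ x, D x * (∑ i, lam i * q i x)) - (∑ x, D x) * Real.log Z := by
          rw [Finset.sum_sub_distrib, ← Finset.sum_neg_distrib, ← Finset.sum_mul]
      _ = -(∑ i, lam i * a i) - Real.log Z := by rw [swap, hD1, one_mul]
  -- pointwise splitting of KL terms
  have hsplit : ∀ D : X → ℝ, (∀ x, 0 ≤ D x) →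
      ∀ x, D x * Real.log (D x / U x)
        = D x * Real.log (D x / Dlam x) + D x * Real.log (Dlam x / U x) := by
    intro D hD0 x
    rcases eq_or_lt_of_le (hD0 x) with h | h
    · rw [← h]; ring
    · rw [Real.log_div (ne_of_gt h) (ne_of_gt (hU0 x)),
        Real.log_div (ne_of_gt h) (ne_of_gt (hDl0 x)),
        Real.log_div (ne_of_gt (hDl0 x)) (ne_of_gt (hU0 x))]
      ring
  have hKLself : KL Dlam Dlam = 0 := by
    rw [hKL]
    refine Finset.sum_eq_zero fun x _ => ?_
    rw [div_self (ne_of_gt (hDl0 x)), Real.log_one, mul_zero]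
  have hpyth : ∀ D : X → ℝ, (∀ x, 0 ≤ D x) → (∑ x, D x = 1) →
      (∀ i, (∑ x, q i x * D x) = a i) → KL D U = KL D Dlam + KL Dlam U := by
    intro D hD0 hD1 hDc
    have h1 : KL D U = KL D Dlam + ∑ x, D x * Real.log (Dlam x / U x) := by
      rw [hKL D U, hKL D Dlam, ← Finset.sum_add_distrib]
      exact Finset.sum_congr rfl fun x _ => hsplit D hD0 x
    rw [h1, hS D hD1 hDc, hKL Dlam U, hS Dlam hDl1 hconstr]
  refine ⟨fun x => (hDl0 x).le, hDl1, hpyth, ?_⟩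
  intro D hD0 hD1 hDc
  have hg := gibbs_aux D Dlam hD0 hDl0 hD1 hDl1
  have hp := hpyth D hD0 hD1 hDc
  rw [hKL D Dlam] at hp
  constructor
  · linarith [hg.1]
  · intro heq
    exact hg.2 (by linarith)
end
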